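/- arXiv:quant-ph/0504048 — 2 statements merged into one kernel-verified Lean document; each statement's English description precedes it below -/
import Mathlib

section
/- Let ρ₁, ρ₂ be quantum states on ℂ^d, let a ∈ [0,1], set D = a·ρ₁ − (1−a)·ρ₂, let Π₊ be the orthogonal projection onto the sum of the eigenspaces of D with strictly positive eigenvalue, and let K be the orthogonal projection onto the kernel of D. Then a two-outcome POVM (B₁, B₂) is Bayes-optimal for the prior (a, 1−a) if and only if Π₊ ≤ B₁ ≤ Π₊ + K (in the positive semidefinite order), i.e. B₁ = Π₊ + K' with 0 ≤ K' ≤ K. -/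
open Matrix ComplexOrder

/-- A quantum state on `ℂ^d`: a positive semidefinite matrix with unit trace. -/
def IsQState {d : ℕ} (ρ : Matrix (Fin d) (Fin d) ℂ) : Prop :=
  ρ.PosSemidef ∧ ρ.trace = 1

/-- A two-outcome POVM: two positive semidefinite matrices summing to the identity. -/
def IsPOVM2 {d : ℕ} (P₁ P₂ : Matrix (Fin d) (Fin d) ℂ) : Prop :=
  P₁.PosSemidef ∧ P₂.PosSemidef ∧ P₁ + P₂ = 1

/-- `(B₁, B₂)` is Bayes-optimal for the prior `(a, 1-a)` and states `ρ₁, ρ₂`: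
it is a POVM maximizing `a·Tr[ρ₁P₁] + (1-a)·Tr[ρ₂P₂]` over all two-outcome POVMs. -/
def IsBayesOpt {d : ℕ} (ρ₁ ρ₂ : Matrix (Fin d) (Fin d) ℂ) (a : ℝ)
    (B₁ B₂ : Matrix (Fin d) (Fin d) ℂ) : Prop :=
  IsPOVM2 B₁ B₂ ∧ ∀ P₁ P₂ : Matrix (Fin d) (Fin d) ℂ, IsPOVM2 P₁ P₂ →
    a * ((ρ₁ * P₁).trace.re) + (1 - a) * ((ρ₂ * P₂).trace.re) ≤
      a * ((ρ₁ * B₁).trace.re) + (1 - a) * ((ρ₂ * B₂).trace.re)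

/-!
The success probability of `(P, 1 - P)` is `Re Tr (D P) + (1 - a) Re Tr ρ₂`, so Bayes optimality
means that `P` maximizes `P ↦ Re Tr (D P)` on the operator interval `[0, 1]`. In an eigenbasis of
`D`, with `C = U⋆ P U`, this is `∑ λᵢ Re Cᵢᵢ`, and `0 ≤ Re Cᵢᵢ ≤ 1` bounds it by `∑ max λᵢ 0`, a
value attained by `Π₊`. Equality forces `Cᵢᵢ = 1` where `λᵢ > 0` and `Cᵢᵢ = 0` where `λᵢ < 0`.
A positive semidefinite matrix vanishes on the row and column of a zero diagonal entry; applied to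
`C` and `1 - C` this makes `C - Π₊` the compression of `C` to the kernel of `D`, which lies between
`0` and the kernel projection.
-/

open scoped MatrixOrder

namespace Matrix

variable {n 𝕜 : Type*} [RCLike 𝕜]

lemma PosSemidef.apply_eq_zero_of_diag_eq_zero [Fintype n] [DecidableEq n] {A : Matrix n n 𝕜}
    (hA : A.PosSemidef) {i : n} (hi : A i i = 0) (j : n) : A j i = 0 ∧ A i j = 0 := by
  have hcol : A *ᵥ Pi.single i 1 = 0 :=
    (hA.dotProduct_mulVec_zero_iff _).1 (by simp [hi])
  have hji : A j i = 0 := by simpa using congrFun hcol j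
  exact ⟨hji, by rw [← hA.isHermitian.apply, hji, star_zero]⟩

lemma re_apply_self_le_of_le {A B : Matrix n n 𝕜} (h : A ≤ B) (i : n) :
    RCLike.re (A i i) ≤ RCLike.re (B i i) := by
  have := (le_iff.1 h).diag_nonneg (i := i)
  rw [RCLike.nonneg_iff, sub_apply, map_sub, sub_nonneg] at this
  exact this.1

lemma diagonal_le_diagonal [DecidableEq n] {d e : n → 𝕜} (h : ∀ i, d i ≤ e i) :
    diagonal d ≤ diagonal e :=
  le_iff.2 <| by rw [diagonal_sub]; exact posSemidef_diagonal_iff.2 fun i => sub_nonneg.2 (h i)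

section
variable [DecidableEq n] {lam : n → ℝ} {C : Matrix n n 𝕜}

lemma re_apply_self_mem_Icc (hC : C ∈ Set.Icc 0 1) (i : n) :
    RCLike.re (C i i) ∈ Set.Icc 0 1 := by
  simpa using And.intro (re_apply_self_le_of_le hC.1 i) (re_apply_self_le_of_le hC.2 i)

lemma mul_re_apply_self_le_max (hC : C ∈ Set.Icc 0 1) (i : n) :
    lam i * RCLike.re (C i i) ≤ max (lam i) 0 := by
  obtain ⟨h0, h1⟩ := re_apply_self_mem_Icc hC i
  rcases le_total 0 (lam i) with h | h
  · nlinarith [le_max_left (lam i) 0]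
  · nlinarith [le_max_right (lam i) 0]

variable [Fintype n]

lemma sum_mul_re_apply_self_le (hC : C ∈ Set.Icc 0 1) :
    ∑ i, lam i * RCLike.re (C i i) ≤ ∑ i, max (lam i) 0 :=
  Finset.sum_le_sum fun i _ => mul_re_apply_self_le_max hC i

lemma sub_diagonal_eq_diagonal_mul_mul_diagonal (hC : C ∈ Set.Icc 0 1)
    (hpos : ∀ i, 0 < lam i → C i i = 1) (hneg : ∀ i, lam i < 0 → C i i = 0) :
    C - diagonal (fun i => if 0 < lam i then 1 else 0) =
      diagonal (fun i => if lam i = 0 then 1 else 0) * C *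
        diagonal (fun i => if lam i = 0 then 1 else 0) := by
  have eq_one : ∀ i, 0 < lam i → ∀ j, C j i = (1 : Matrix n n 𝕜) j i ∧
      C i j = (1 : Matrix n n 𝕜) i j := by
    intro i hi j
    obtain ⟨h, h'⟩ := (le_iff.1 hC.2).apply_eq_zero_of_diag_eq_zero (i := i)
      (by simp [hpos i hi]) j
    exact ⟨(sub_eq_zero.1 h).symm, (sub_eq_zero.1 h').symm⟩
  have eq_zero : ∀ i, lam i < 0 → ∀ j, C j i = 0 ∧ C i j = 0 := fun i hi =>
    (nonneg_iff_posSemidef.1 hC.1).apply_eq_zero_of_diag_eq_zero (hneg i hi)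
  ext i j
  simp only [sub_apply, diagonal_apply, mul_diagonal, diagonal_mul]
  rcases lt_trichotomy (lam i) 0 with hi | hi | hi
  · simp [(eq_zero i hi j).2, hi.ne, hi.not_gt]
  · rcases lt_trichotomy (lam j) 0 with hj | hj | hj
    · simp [(eq_zero j hj i).1, hi]
    · simp [hi, hj]
    · have hij : i ≠ j := by rintro rfl; linarith
      simp [(eq_one j hj i).1, hi, hj.ne', hij]
  · by_cases hij : i = j
    · subst hij; simp [hpos i hi, hi, hi.ne']
    · simp [(eq_one i hi j).2, hi.ne', hij]

lemma diagonal_le_and_le_of_sum_eq (hC : C ∈ Set.Icc 0 1)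
    (hsum : ∑ i, lam i * RCLike.re (C i i) = ∑ i, max (lam i) 0) :
    diagonal (fun i => if 0 < lam i then 1 else 0) ≤ C ∧
      C ≤ diagonal (fun i => if 0 < lam i then 1 else 0) +
        diagonal (fun i => if lam i = 0 then 1 else 0) := by
  have hterm : ∀ i, lam i * RCLike.re (C i i) = max (lam i) 0 := fun i =>
    (Finset.sum_eq_sum_iff_of_le fun i _ => mul_re_apply_self_le_max hC i).1 hsum i
      (Finset.mem_univ i)
  have hre : ∀ i, C i i = RCLike.re (C i i) :=
    fun i => ((nonneg_iff_posSemidef.1 hC.1).isHermitian.coe_re_apply_self i).symm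
  have hpos : ∀ i, 0 < lam i → C i i = 1 := by
    intro i hi
    have := hterm i
    rw [max_eq_left hi.le, mul_eq_left₀ hi.ne'] at this
    rw [hre, this, RCLike.ofReal_one]
  have hneg : ∀ i, lam i < 0 → C i i = 0 := by
    intro i hi
    have := hterm i
    rw [max_eq_right hi.le, mul_eq_zero, or_iff_right hi.ne] at this
    rw [hre, this, RCLike.ofReal_zero]
  set G : Matrix n n 𝕜 := diagonal (fun i => if lam i = 0 then 1 else 0)
  have hG : IsSelfAdjoint G := by
    simp [G, IsSelfAdjoint, star_eq_conjTranspose, diagonal_conjTranspose, apply_ite]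
  have hGG : G * G = G := by simp [G, diagonal_mul_diagonal]
  have hcomp := sub_diagonal_eq_diagonal_mul_mul_diagonal hC hpos hneg
  constructor
  · rw [← sub_nonneg, hcomp]
    exact hG.conjugate_nonneg hC.1
  · rw [← sub_nonneg, show diagonal _ + G - C = G * (1 - C) * G by
      rw [mul_sub, sub_mul, mul_one, hGG, ← hcomp]; abel]
    exact hG.conjugate_nonneg (sub_nonneg.2 hC.2)

lemma sum_eq_of_diagonal_le_and_le
    (h : diagonal (fun i => if 0 < lam i then 1 else 0) ≤ C ∧
      C ≤ diagonal (fun i => if 0 < lam i then 1 else 0) +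
        diagonal (fun i => if lam i = 0 then 1 else 0)) :
    C ∈ Set.Icc 0 1 ∧ ∑ i, lam i * RCLike.re (C i i) = ∑ i, max (lam i) 0 := by
  refine ⟨⟨le_trans ?_ h.1, h.2.trans ?_⟩, Finset.sum_congr rfl fun i _ => ?_⟩
  · rw [← diagonal_zero]
    exact diagonal_le_diagonal fun i => by split_ifs <;> simp
  · rw [diagonal_add, ← diagonal_one]
    exact diagonal_le_diagonal fun i => by split_ifs <;> simp_all
  · have h₁ := re_apply_self_le_of_le h.1 i
    have h₂ := re_apply_self_le_of_le h.2 i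
    simp only [add_apply, diagonal_apply_eq, map_add] at h₁ h₂
    rcases lt_trichotomy (lam i) 0 with hi | hi | hi
    · simp_all [hi.ne, hi.not_gt, hi.le]
      linarith
    · simp [hi]
    · simp_all [hi.ne', hi.le]
      linarith
end

section Unitary

variable [Fintype n] [DecidableEq n]

lemma trace_conjStarAlgAut (u : unitary (Matrix n n 𝕜)) (X : Matrix n n 𝕜) :
    (Unitary.conjStarAlgAut 𝕜 _ u X).trace = X.trace := by
  rw [Unitary.conjStarAlgAut_apply, trace_mul_cycle, Unitary.coe_star_mul_self, one_mul]

lemma conjStarAlgAut_mem_Icc_iff (u : unitary (Matrix n n 𝕜)) {X : Matrix n n 𝕜} :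
    Unitary.conjStarAlgAut 𝕜 _ u X ∈ Set.Icc 0 1 ↔ X ∈ Set.Icc 0 1 := by
  have h₀ := map_le_map_iff (Unitary.conjStarAlgAut 𝕜 _ u) (a := 0) (b := X)
  have h₁ := map_le_map_iff (Unitary.conjStarAlgAut 𝕜 _ u) (a := X) (b := 1)
  rw [map_zero] at h₀
  rw [map_one] at h₁
  simp only [Set.mem_Icc, h₀, h₁]

end Unitary

namespace IsHermitian

variable [Fintype n] [DecidableEq n] {A : Matrix n n 𝕜} (hA : A.IsHermitian)
lemma cfc_ite (p : ℝ → Prop) [DecidablePred p] :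
    hA.cfc (fun x => if p x then 1 else 0) =
      Unitary.conjStarAlgAut 𝕜 _ hA.eigenvectorUnitary
        (diagonal fun i => if p (hA.eigenvalues i) then 1 else 0) := by
  simp [IsHermitian.cfc, Function.comp_def, apply_ite]

lemma re_trace_mul_conjStarAlgAut (C : Matrix n n 𝕜) :
    RCLike.re (A * Unitary.conjStarAlgAut 𝕜 _ hA.eigenvectorUnitary C).trace =
      ∑ i, hA.eigenvalues i * RCLike.re (C i i) := by
  have hspec := hA.spectral_theorem
  set Φ := Unitary.conjStarAlgAut 𝕜 (Matrix n n 𝕜) hA.eigenvectorUnitary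
  calc RCLike.re (A * Φ C).trace
      = RCLike.re (Φ (diagonal (RCLike.ofReal ∘ hA.eigenvalues)) * Φ C).trace := by rw [← hspec]
    _ = ∑ i, hA.eigenvalues i * RCLike.re (C i i) := by
      rw [← map_mul, trace_conjStarAlgAut]
      simp [trace, diagonal_mul]

theorem re_trace_mul_le {P : Matrix n n 𝕜} (hP : P ∈ Set.Icc 0 1) :
    RCLike.re (A * P).trace ≤ ∑ i, max (hA.eigenvalues i) 0 := by
  obtain ⟨C, rfl⟩ := EquivLike.surjective (Unitary.conjStarAlgAut 𝕜 _ hA.eigenvectorUnitary) P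
  rw [hA.re_trace_mul_conjStarAlgAut]
  exact sum_mul_re_apply_self_le ((conjStarAlgAut_mem_Icc_iff _).1 hP)

theorem mem_Icc_and_re_trace_mul_eq_iff {P : Matrix n n 𝕜} :
    (P ∈ Set.Icc 0 1 ∧ RCLike.re (A * P).trace = ∑ i, max (hA.eigenvalues i) 0) ↔
      hA.cfc (fun x => if 0 < x then 1 else 0) ≤ P ∧
        P ≤ hA.cfc (fun x => if 0 < x then 1 else 0) +
          hA.cfc (fun x => if x = 0 then 1 else 0) := by
  obtain ⟨C, rfl⟩ := EquivLike.surjective (Unitary.conjStarAlgAut 𝕜 _ hA.eigenvectorUnitary) P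
  rw [conjStarAlgAut_mem_Icc_iff, hA.re_trace_mul_conjStarAlgAut, hA.cfc_ite, hA.cfc_ite,
    ← map_add, map_le_map_iff, map_le_map_iff]
  exact ⟨fun h => diagonal_le_and_le_of_sum_eq h.1 h.2, sum_eq_of_diagonal_le_and_le⟩

theorem isMaxOn_re_trace_mul_iff {P : Matrix n n 𝕜} :
    (P ∈ Set.Icc 0 1 ∧ IsMaxOn (fun Q => RCLike.re (A * Q).trace) (Set.Icc 0 1) P) ↔
      hA.cfc (fun x => if 0 < x then 1 else 0) ≤ P ∧
        P ≤ hA.cfc (fun x => if 0 < x then 1 else 0) +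
          hA.cfc (fun x => if x = 0 then 1 else 0) := by
  rw [← hA.mem_Icc_and_re_trace_mul_eq_iff]
  have hK : 0 ≤ hA.cfc (fun x => if x = 0 then 1 else 0) :=
    hA.cfc_eq _ ▸ cfc_nonneg fun x _ => by split_ifs <;> norm_num
  obtain ⟨hPlus, hPlusMax⟩ :=
    hA.mem_Icc_and_re_trace_mul_eq_iff.2 ⟨le_rfl, le_add_of_nonneg_right hK⟩
  refine and_congr_right fun hP => ⟨fun hmax => ?_, fun heq Q hQ => ?_⟩
  · exact le_antisymm (hA.re_trace_mul_le hP) (hPlusMax ▸ hmax hPlus)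
  · exact (hA.re_trace_mul_le hQ).trans_eq heq.symm

end IsHermitian

end Matrix

section Bayes

variable {d : ℕ}

lemma isPOVM2_iff {P₁ P₂ : Matrix (Fin d) (Fin d) ℂ} :
    IsPOVM2 P₁ P₂ ↔ P₂ = 1 - P₁ ∧ P₁ ∈ Set.Icc 0 1 := by
  constructor
  · rintro ⟨h₁, h₂, hsum⟩
    obtain rfl : P₂ = 1 - P₁ := eq_sub_of_add_eq' hsum
    exact ⟨rfl, nonneg_iff_posSemidef.2 h₁, h₂⟩
  · rintro ⟨rfl, h₀, h₁⟩
    exact ⟨nonneg_iff_posSemidef.1 h₀, h₁, add_sub_cancel _ _⟩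

lemma bayes_objective_eq_re_trace_mul {ρ₁ ρ₂ D : Matrix (Fin d) (Fin d) ℂ} {a : ℝ}
    (hD : D = (a : ℂ) • ρ₁ - ((1 - a : ℝ) : ℂ) • ρ₂) (P : Matrix (Fin d) (Fin d) ℂ) :
    a * (ρ₁ * P).trace.re + (1 - a) * (ρ₂ * (1 - P)).trace.re =
      (D * P).trace.re + (1 - a) * ρ₂.trace.re := by
  subst hD
  simp only [sub_mul, mul_sub, smul_mul, mul_one, trace_sub, trace_smul, smul_eq_mul,
    Complex.sub_re, Complex.re_ofReal_mul]
  ring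

lemma isBayesOpt_iff_isMaxOn {ρ₁ ρ₂ D B₁ B₂ : Matrix (Fin d) (Fin d) ℂ} {a : ℝ}
    (hD : D = (a : ℂ) • ρ₁ - ((1 - a : ℝ) : ℂ) • ρ₂) :
    IsBayesOpt ρ₁ ρ₂ a B₁ B₂ ↔
      B₂ = 1 - B₁ ∧ B₁ ∈ Set.Icc 0 1 ∧
        IsMaxOn (fun P => (D * P).trace.re) (Set.Icc 0 1) B₁ := by
  rw [IsBayesOpt, isPOVM2_iff, and_assoc]
  constructor
  · rintro ⟨rfl, hB, hmax⟩
    refine ⟨rfl, hB, fun P hP => ?_⟩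
    have := hmax P (1 - P) (isPOVM2_iff.2 ⟨rfl, hP⟩)
    rw [bayes_objective_eq_re_trace_mul hD, bayes_objective_eq_re_trace_mul hD] at this
    simpa using this
  · rintro ⟨rfl, hB, hmax⟩
    refine ⟨rfl, hB, fun P₁ P₂ hPOVM => ?_⟩
    obtain ⟨rfl, hP⟩ := isPOVM2_iff.1 hPOVM
    rw [bayes_objective_eq_re_trace_mul hD, bayes_objective_eq_re_trace_mul hD]
    simpa using hmax hP

end Bayes

theorem bayes_opt_iff_between_positive_part_and_kernel_general
    {d : ℕ} (ρ₁ ρ₂ : Matrix (Fin d) (Fin d) ℂ)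
    (a : ℝ)
    (D : Matrix (Fin d) (Fin d) ℂ)
    (hD : D = (a : ℂ) • ρ₁ - ((1 - a : ℝ) : ℂ) • ρ₂)
    (hDherm : D.IsHermitian)
    (Pplus K : Matrix (Fin d) (Fin d) ℂ)
    (hPplus : Pplus = hDherm.cfc (fun x => if 0 < x then 1 else 0))
    (hK : K = hDherm.cfc (fun x => if x = 0 then 1 else 0))
    (B₁ B₂ : Matrix (Fin d) (Fin d) ℂ) :
    IsBayesOpt ρ₁ ρ₂ a B₁ B₂ ↔
      (B₂ = 1 - B₁ ∧ (B₁ - Pplus).PosSemidef ∧ (Pplus + K - B₁).PosSemidef) := by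
  subst hPplus hK
  rw [isBayesOpt_iff_isMaxOn hD]
  exact and_congr_right fun _ => hDherm.isMaxOn_re_trace_mul_iff

/-- With `D = a·ρ₁ − (1−a)·ρ₂`, `Π₊` the orthogonal projection onto the sum of
the eigenspaces of `D` with strictly positive eigenvalue, and `K` the orthogonal projection onto
the kernel of `D`, a pair `(B₁, B₂)` is a Bayes-optimal two-outcome POVM for the prior
`(a, 1−a)` if and only if `B₂ = I − B₁` and `Π₊ ≤ B₁ ≤ Π₊ + K` in the positive semidefinite
(Loewner) order. -/
theorem bayes_opt_iff_between_positive_part_and_kernel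
    {d : ℕ} (ρ₁ ρ₂ : Matrix (Fin d) (Fin d) ℂ)
    (hρ₁ : IsQState ρ₁) (hρ₂ : IsQState ρ₂)
    (a : ℝ) (ha : a ∈ Set.Icc (0 : ℝ) 1)
    (D : Matrix (Fin d) (Fin d) ℂ)
    (hD : D = (a : ℂ) • ρ₁ - ((1 - a : ℝ) : ℂ) • ρ₂)
    (hDherm : D.IsHermitian)
    (Pplus K : Matrix (Fin d) (Fin d) ℂ)
    (hPplus : Pplus = hDherm.cfc (fun x => if 0 < x then 1 else 0))
    (hK : K = hDherm.cfc (fun x => if x = 0 then 1 else 0))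
    (B₁ B₂ : Matrix (Fin d) (Fin d) ℂ) :
    IsBayesOpt ρ₁ ρ₂ a B₁ B₂ ↔
      (B₂ = 1 - B₁ ∧ (B₁ - Pplus).PosSemidef ∧ (Pplus + K - B₁).PosSemidef) :=
  bayes_opt_iff_between_positive_part_and_kernel_general ρ₁ ρ₂ a D hD hDherm Pplus K hPplus hK B₁ B₂
end

section
/- Let ρ₁, …, ρ_N be quantum states on ℂ^d and let w : {1,…,N} × {1,…,N} → ℝ≥0 be a family of nonnegative weights (w_ij is the price of misidentifying state i as state j). Then strong duality holds between the minimax risk and the worst-case Bayesian risk: inf over N-outcome POVMs (P₁,…,P_N) of max_i ∑_j w_ij · Tr[ρᵢP_j] equals the maximum, over probability vectors (a₁,…,a_N) (aᵢ ≥ 0, ∑ᵢaᵢ = 1), of the infimum over N-outcome POVMs of ∑_i a_i ∑_j w_ij · Tr[ρᵢP_j]; moreover the outer maximum over priors is attained. -/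
open Matrix ComplexOrder

/-- An `N`-outcome POVM: a family of positive semidefinite matrices summing to the identity. -/
def IsPOVM {d N : ℕ} (P : Fin N → Matrix (Fin d) (Fin d) ℂ) : Prop :=
  (∀ i, (P i).PosSemidef) ∧ ∑ i, P i = 1

/-!
The risk vectors `i ↦ ∑ j, w i j * Tr[ρᵢ P_j]` of all POVMs form a convex set `K ⊆ ℝ^N`, since
POVMs form a convex set and the risk is linear in the POVM; it lies in the nonnegative orthant.
If `c` is the minimax value, `K` misses the open orthant `{y | ∀ i, y i < c}`. A hyperplane
separating the two is bounded above on that orthant, so its normal has nonnegative coordinates;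
normalised, it is a prior `a` whose Bayes risk `∑ i, a i * x i` is at least `c` on all of `K`.
Weak duality `∑ i, a i * x i ≤ ⨆ i, x i` gives the reverse inequality for every prior.
-/

open Set Topology

section Minimax

variable {ι : Type*} [Fintype ι]

theorem nonneg_of_forall_sum_mul_lt {b : ι → ℝ} {c u : ℝ}
    (h : ∀ y : ι → ℝ, (∀ i, y i < c) → ∑ i, b i * y i < u) (i : ι) : 0 ≤ b i := by
  classical
  have hshift : ∀ t : ℝ, 0 ≤ t → (c - 1) * ∑ j, b j - t * b i < u := fun t ht => by
    convert h (fun j => c - 1 - t * (Pi.single i 1 : ι → ℝ) j) fun j => ?_ using 1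
    · simp [mul_sub, Finset.sum_sub_distrib, Finset.mul_sum, mul_comm, Pi.single_apply]
    · rcases eq_or_ne j i with rfl | hj
      · simp only [Pi.single_eq_same]; linarith
      · simp [hj]
  by_contra! hbi
  have hu : (c - 1) * ∑ j, b j < u := by simpa using hshift 0 le_rfl
  have := hshift ((u - (c - 1) * ∑ j, b j) / -b i) (div_nonneg (by linarith) (by linarith))
  field_simp [hbi.ne] at this
  linarith

theorem mul_sum_le_of_forall_sum_mul_lt {b : ι → ℝ} {c u : ℝ}
    (h : ∀ y : ι → ℝ, (∀ i, y i < c) → ∑ i, b i * y i < u) : c * ∑ i, b i ≤ u := by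
  refine le_of_tendsto (f := fun t => t * ∑ i, b i) (x := 𝓝[<] c)
    ((continuous_id.mul continuous_const).continuousWithinAt) ?_
  filter_upwards [self_mem_nhdsWithin] with t ht
  simpa [Finset.mul_sum, mul_comm] using (h (fun _ => t) fun _ => ht).le

theorem exists_mem_stdSimplex_forall_le_sum_mul {K : Set (ι → ℝ)} (hK : Convex ℝ K)
    (hKne : K.Nonempty) {c : ℝ} (hc : ∀ x ∈ K, ∃ i, c ≤ x i) :
    ∃ a ∈ stdSimplex ℝ ι, ∀ x ∈ K, c ≤ ∑ i, a i * x i := by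
  classical
  have hdisj : Disjoint (univ.pi fun _ => Iio c) K := disjoint_left.2 fun x hxc hxK => by
    obtain ⟨i, hi⟩ := hc x hxK
    exact (hxc i (mem_univ i)).not_ge hi
  obtain ⟨f, u, hfc, hfK⟩ := geometric_hahn_banach_open (convex_pi fun _ _ => convex_Iio c)
    (isOpen_set_pi finite_univ fun _ _ => isOpen_Iio) hK hdisj
  set b : ι → ℝ := fun i => f (Pi.single i 1)
  have hf : ∀ x, f x = ∑ i, b i * x i := fun x => by
    conv_lhs => rw [pi_eq_sum_univ' x]
    simp [b, mul_comm]
  have hlt : ∀ y : ι → ℝ, (∀ i, y i < c) → ∑ i, b i * y i < u := fun y hy =>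
    hf y ▸ hfc y fun i _ => hy i
  have hb : ∀ i, 0 ≤ b i := nonneg_of_forall_sum_mul_lt hlt
  have hS : 0 < ∑ i, b i := by
    refine (Finset.sum_nonneg fun i _ => hb i).lt_of_ne fun hS => ?_
    have hb0 : ∀ i, b i = 0 := fun i =>
      (Finset.sum_eq_zero_iff_of_nonneg fun i _ => hb i).1 hS.symm i (Finset.mem_univ i)
    obtain ⟨x, hx⟩ := hKne
    have h1 := hlt (fun _ => c - 1) fun _ => by linarith
    have h2 := hf x ▸ hfK x hx
    simp only [hb0, zero_mul, Finset.sum_const_zero] at h1 h2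
    linarith
  refine ⟨fun i => b i / ∑ j, b j, ⟨fun i => div_nonneg (hb i) hS.le, ?_⟩, fun x hx => ?_⟩
  · rw [← Finset.sum_div, div_self hS.ne']
  · simp_rw [div_mul_eq_mul_div, ← Finset.sum_div]
    rw [le_div_iff₀ hS, ← hf]
    exact (mul_sum_le_of_forall_sum_mul_lt hlt).trans (hfK x hx)

theorem sum_mul_le_iSup {a : ι → ℝ} (ha : a ∈ stdSimplex ℝ ι) (x : ι → ℝ) :
    ∑ i, a i * x i ≤ ⨆ i, x i :=
  calc ∑ i, a i * x i ≤ ∑ i, a i * ⨆ j, x j := Finset.sum_le_sum fun i _ =>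
        mul_le_mul_of_nonneg_left (le_ciSup (finite_range x).bddAbove i) (ha.1 i)
    _ = ⨆ j, x j := by rw [← Finset.sum_mul, ha.2, one_mul]

variable {K : Set (ι → ℝ)}

theorem sInf_image_sum_mul_le_sInf_image_iSup (hKne : K.Nonempty) (hKbdd : BddBelow K)
    {a : ι → ℝ} (ha : a ∈ stdSimplex ℝ ι) :
    sInf ((fun x => ∑ i, a i * x i) '' K) ≤ sInf ((fun x => ⨆ i, x i) '' K) := by
  have hmono : Monotone fun x : ι → ℝ => ∑ i, a i * x i := fun x y hxy =>
    Finset.sum_le_sum fun i _ => mul_le_mul_of_nonneg_left (hxy i) (ha.1 i)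
  refine le_csInf (hKne.image _) (forall_mem_image.2 fun x hx => ?_)
  exact (csInf_le (hmono.map_bddBelow hKbdd) (mem_image_of_mem _ hx)).trans (sum_mul_le_iSup ha x)

theorem exists_mem_stdSimplex_sInf_image_sum_mul_eq [Nonempty ι] (hK : Convex ℝ K)
    (hKne : K.Nonempty) (hKbdd : BddBelow K) :
    ∃ a ∈ stdSimplex ℝ ι,
      sInf ((fun x => ∑ i, a i * x i) '' K) = sInf ((fun x => ⨆ i, x i) '' K) := by
  set c := sInf ((fun x => ⨆ i, x i) '' K)
  have hmono : Monotone fun x : ι → ℝ => ⨆ i, x i := fun x y hxy =>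
    ciSup_mono (finite_range y).bddAbove hxy
  have hc : ∀ x ∈ K, ∃ i, c ≤ x i := fun x hx => by
    obtain ⟨i, hi⟩ := exists_eq_ciSup_of_finite (f := x)
    exact ⟨i, hi ▸ csInf_le (hmono.map_bddBelow hKbdd) (mem_image_of_mem _ hx)⟩
  obtain ⟨a, ha, hac⟩ := exists_mem_stdSimplex_forall_le_sum_mul hK hKne hc
  refine ⟨a, ha, (sInf_image_sum_mul_le_sInf_image_iSup hKne hKbdd ha).antisymm ?_⟩
  exact le_csInf (hKne.image _) (forall_mem_image.2 hac)

end Minimax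

theorem Matrix.PosSemidef.trace_mul_nonneg {𝕜 n : Type*} [RCLike 𝕜] [Fintype n] [DecidableEq n]
    {A B : Matrix n n 𝕜} (hA : A.PosSemidef) (hB : B.PosSemidef) : 0 ≤ (A * B).trace := by
  open scoped MatrixOrder in
  obtain ⟨C, rfl⟩ := CStarAlgebra.nonneg_iff_eq_star_mul_self.mp hB.nonneg
  rw [star_eq_conjTranspose, ← Matrix.mul_assoc, Matrix.trace_mul_cycle]
  exact (hA.mul_mul_conjTranspose_same C).trace_nonneg

section POVM

variable {d N : ℕ}

theorem isPOVM_single (i : Fin N) : IsPOVM (Pi.single i (1 : Matrix (Fin d) (Fin d) ℂ)) := by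
  refine ⟨fun j => ?_, by simp [Finset.sum_pi_single']⟩
  rcases eq_or_ne j i with rfl | hj
  · simpa using PosSemidef.one
  · simpa [hj] using PosSemidef.zero

theorem convex_setOf_isPOVM : Convex ℝ {P : Fin N → Matrix (Fin d) (Fin d) ℂ | IsPOVM P} := by
  rintro P ⟨hP, hP1⟩ Q ⟨hQ, hQ1⟩ s t hs ht hst
  refine ⟨fun j => ((hP j).smul hs).add ((hQ j).smul ht), ?_⟩
  simp [Finset.sum_add_distrib, ← Finset.smul_sum, hP1, hQ1, ← add_smul, hst]

noncomputable def riskVector (ρ : Fin N → Matrix (Fin d) (Fin d) ℂ) (w : Fin N → Fin N → ℝ) :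
    (Fin N → Matrix (Fin d) (Fin d) ℂ) →ₗ[ℝ] Fin N → ℝ where
  toFun P i := ∑ j, w i j * (ρ i * P j).trace.re
  map_add' P Q := by ext i; simp [mul_add, Finset.sum_add_distrib]
  map_smul' r P := by ext i; simp [Finset.mul_sum, mul_left_comm]

theorem riskVector_apply (ρ : Fin N → Matrix (Fin d) (Fin d) ℂ) (w : Fin N → Fin N → ℝ)
    (P : Fin N → Matrix (Fin d) (Fin d) ℂ) (i : Fin N) :
    riskVector ρ w P i = ∑ j, w i j * (ρ i * P j).trace.re := rfl

theorem riskVector_nonneg {ρ : Fin N → Matrix (Fin d) (Fin d) ℂ} (hρ : ∀ i, (ρ i).PosSemidef)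
    {w : Fin N → Fin N → ℝ} (hw : ∀ i j, 0 ≤ w i j) {P : Fin N → Matrix (Fin d) (Fin d) ℂ}
    (hP : IsPOVM P) : 0 ≤ riskVector ρ w P := fun i => by
  rw [Pi.zero_apply, riskVector_apply]
  exact Finset.sum_nonneg fun j _ =>
    mul_nonneg (hw i j) (Complex.nonneg_iff.1 ((hρ i).trace_mul_nonneg (hP.1 j))).1

end POVM

/-- Strong duality for minimax discrimination with weights: the infimum over
POVMs of the worst-case risk `max_i ∑_j w_ij Tr[ρᵢP_j]` equals the maximum over priors of the
Bayesian risk `inf_P ∑_i a_i ∑_j w_ij Tr[ρᵢP_j]`, and the maximum over priors is attained. -/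
theorem minimax_risk_strong_duality
    {d N : ℕ} (hN : 0 < N)
    (ρ : Fin N → Matrix (Fin d) (Fin d) ℂ) (hρ : ∀ i, IsQState (ρ i))
    (w : Fin N → Fin N → ℝ) (hw : ∀ i j, 0 ≤ w i j) :
    ∃ a : Fin N → ℝ,
      IsGreatest
        { r : ℝ | ∃ b : Fin N → ℝ, (∀ i, 0 ≤ b i) ∧ (∑ i, b i) = 1 ∧
            r = sInf { s : ℝ | ∃ P : Fin N → Matrix (Fin d) (Fin d) ℂ, IsPOVM P ∧
              s = ∑ i, b i * ∑ j, w i j * ((ρ i * P j).trace.re) } }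
        (sInf { s : ℝ | ∃ P : Fin N → Matrix (Fin d) (Fin d) ℂ, IsPOVM P ∧
            s = ⨆ i, ∑ j, w i j * ((ρ i * P j).trace.re) }) ∧
      (∀ i, 0 ≤ a i) ∧ (∑ i, a i) = 1 ∧
      sInf { s : ℝ | ∃ P : Fin N → Matrix (Fin d) (Fin d) ℂ, IsPOVM P ∧
          s = ∑ i, a i * ∑ j, w i j * ((ρ i * P j).trace.re) } =
        sInf { s : ℝ | ∃ P : Fin N → Matrix (Fin d) (Fin d) ℂ, IsPOVM P ∧
          s = ⨆ i, ∑ j, w i j * ((ρ i * P j).trace.re) } := by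
  have : Nonempty (Fin N) := ⟨⟨0, hN⟩⟩
  set K := riskVector ρ w '' {P | IsPOVM P}
  have hK : Convex ℝ K := convex_setOf_isPOVM.linear_image _
  have hKne : K.Nonempty := ⟨_, mem_image_of_mem _ (isPOVM_single ⟨0, hN⟩)⟩
  have hKbdd : BddBelow K :=
    ⟨0, forall_mem_image.2 fun _ hP => riskVector_nonneg (fun i => (hρ i).1) hw hP⟩
  have hBayes : ∀ b : Fin N → ℝ, { s : ℝ | ∃ P : Fin N → Matrix (Fin d) (Fin d) ℂ, IsPOVM P ∧
      s = ∑ i, b i * ∑ j, w i j * ((ρ i * P j).trace.re) } = (fun x => ∑ i, b i * x i) '' K :=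
    fun b => by ext; simp [K, riskVector_apply, eq_comm]
  have hWorst : { s : ℝ | ∃ P : Fin N → Matrix (Fin d) (Fin d) ℂ, IsPOVM P ∧
      s = ⨆ i, ∑ j, w i j * ((ρ i * P j).trace.re) } = (fun x => ⨆ i, x i) '' K := by
    ext; simp [K, riskVector_apply, eq_comm]
  simp only [hBayes, hWorst]
  obtain ⟨a, ha, hEq⟩ := exists_mem_stdSimplex_sInf_image_sum_mul_eq hK hKne hKbdd
  refine ⟨a, ⟨⟨a, ha.1, ha.2, hEq.symm⟩, ?_⟩, ha.1, ha.2, hEq⟩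
  rintro r ⟨b, hb0, hb1, rfl⟩
  exact sInf_image_sum_mul_le_sInf_image_iSup hKne hKbdd ⟨hb0, hb1⟩
end
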